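/- arXiv:2303.02225 — 2 statements merged into one kernel-verified Lean document; each statement's English description precedes it below -/
import Mathlib

section
/- Let F be a field, n ≥ 2, and t ∈ F with t ≠ 0 and t ≠ 1. Let γ(t) ∈ GL(n+1,F) have I_{n-1} in the upper-left block and the 2×2 block [[1,t],[1,1]] in the lower-right (zeros elsewhere); note det of the 2×2 block is 1−t ≠ 0, so γ(t) is invertible. For x, y ∈ GL(n,F) write ι(x) = diag(x,1). Then ι(x)·γ(t) = γ(t)·ι(y) if and only if x = y and x = diag(A, 1) for some A ∈ GL(n-1,F). -/
/-- The embedding `x ↦ diag(x, 1)` of `GL(n)` into `GL(n+1)`. -/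
def iota {R : Type*} [CommRing R] {n : ℕ} (x : Matrix (Fin n) (Fin n) R) :
    Matrix (Fin (n + 1)) (Fin (n + 1)) R :=
  Matrix.reindex finSumFinEquiv finSumFinEquiv
    (Matrix.fromBlocks x 0 0 (1 : Matrix (Fin 1) (Fin 1) R))

lemma iota_cc {R : Type*} [CommRing R] {n : ℕ} (x : Matrix (Fin n) (Fin n) R) (i j : Fin n) :
    iota x i.castSucc j.castSucc = x i j := by
  simp [iota, Fin.castSucc, finSumFinEquiv_symm_apply_castAdd]

lemma last_eq {n : ℕ} : Fin.last n = finSumFinEquiv (Sum.inr (0 : Fin 1)) := by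
  simp [finSumFinEquiv_apply_right, Fin.ext_iff]

lemma iota_cl {R : Type*} [CommRing R] {n : ℕ} (x : Matrix (Fin n) (Fin n) R) (i : Fin n) :
    iota x i.castSucc (Fin.last n) = 0 := by
  simp [iota, Fin.castSucc, finSumFinEquiv_symm_apply_castAdd, last_eq]

lemma iota_lc {R : Type*} [CommRing R] {n : ℕ} (x : Matrix (Fin n) (Fin n) R) (j : Fin n) :
    iota x (Fin.last n) j.castSucc = 0 := by
  simp [iota, Fin.castSucc, finSumFinEquiv_symm_apply_castAdd, last_eq]

lemma iota_ll {R : Type*} [CommRing R] {n : ℕ} (x : Matrix (Fin n) (Fin n) R) :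
    iota x (Fin.last n) (Fin.last n) = 1 := by
  simp [iota, last_eq, Matrix.one_apply]

lemma mulStd {R : Type*} [CommRing R] {m : ℕ} (M : Matrix (Fin m) (Fin m) R) (a b i j : Fin m) (c : R) :
    (M * Matrix.single a b c) i j = if j = b then M i a * c else 0 := by
  rcases eq_or_ne j b with rfl | h
  · simp [Matrix.mul_single_apply_same]
  · simp [h, Matrix.mul_apply, Matrix.single, Ne.symm h]

lemma stdMul {R : Type*} [CommRing R] {m : ℕ} (M : Matrix (Fin m) (Fin m) R) (a b i j : Fin m) (c : R) :
    (Matrix.single a b c * M) i j = if i = a then c * M b j else 0 := by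
  rcases eq_or_ne i a with rfl | h
  · simp [Matrix.single_mul_apply_same]
  · simp [h, Matrix.mul_apply, Matrix.single, Ne.symm h]

set_option maxHeartbeats 1000000 in
/-- The stabilizer of `γ(t)`, `t ≠ 0, 1`, is the diagonal copy of `diag(GL(n-1), 1)`. -/
theorem stmt_5 (F : Type*) [Field F] (n : ℕ) (hn : 2 ≤ n) (t : F) (ht0 : t ≠ 0) (ht1 : t ≠ 1)
    (x y : Matrix (Fin n) (Fin n) F) (hx : IsUnit x.det) (hy : IsUnit y.det) :
    iota x * (1 + Matrix.single (⟨n - 1, by omega⟩ : Fin (n + 1)) ⟨n, by omega⟩ t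
        + Matrix.single (⟨n, by omega⟩ : Fin (n + 1)) ⟨n - 1, by omega⟩ 1) =
      (1 + Matrix.single (⟨n - 1, by omega⟩ : Fin (n + 1)) ⟨n, by omega⟩ t
        + Matrix.single (⟨n, by omega⟩ : Fin (n + 1)) ⟨n - 1, by omega⟩ 1) * iota y ↔
    x = y ∧ ∃ A : Matrix (Fin (n - 1)) (Fin (n - 1)) F, IsUnit A.det ∧
      x = Matrix.reindex (finCongr (by omega : n - 1 + 1 = n)) (finCongr (by omega)) (iota A) := by
  have hn1 : n - 1 < n := by omega
  set p : Fin n := ⟨n - 1, hn1⟩ with hp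
  have he1 : (⟨n - 1, by omega⟩ : Fin (n + 1)) = p.castSucc := rfl
  have he2 : (⟨n, by omega⟩ : Fin (n + 1)) = Fin.last n := rfl
  -- the reindexing equation is equivalent to entrywise statements
  have key : ∀ z : Matrix (Fin n) (Fin n) F, ∀ A : Matrix (Fin (n-1)) (Fin (n-1)) F,
      z = Matrix.reindex (finCongr (by omega : n - 1 + 1 = n)) (finCongr (by omega)) (iota A) ↔
      ∀ i j : Fin n, z i j =
        iota A (Fin.cast (by omega : n = n - 1 + 1) i) (Fin.cast (by omega) j) := by
    intro z A
    rw [← Matrix.ext_iff]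
    constructor <;> intro hz i j <;> have := hz i j <;>
      simpa [Matrix.reindex_apply, Matrix.submatrix_apply, finCongr, Fin.cast] using this
  constructor
  · intro h
    rw [mul_add, mul_add, mul_one, add_mul, add_mul, one_mul] at h
    have H : ∀ i j : Fin (n + 1),
        iota x i j + (iota x * Matrix.single p.castSucc (Fin.last n) t) i j
          + (iota x * Matrix.single (Fin.last n) p.castSucc (1 : F)) i j =
        iota y i j + (Matrix.single p.castSucc (Fin.last n) t * iota y) i j
          + (Matrix.single (Fin.last n) p.castSucc (1 : F) * iota y) i j := by
      intro i j
      have := congrFun (congrFun h i) j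
      simpa [he1, he2, Matrix.add_apply] using this
    have hxy : x = y := by
      ext i j
      have H2 := H i.castSucc j.castSucc
      simpa [mulStd, stdMul, iota_cc, iota_cl, iota_lc, (Fin.castSucc_lt_last j).ne,
        (Fin.castSucc_lt_last i).ne] using H2
    have hcol : ∀ i : Fin n, x i p = if i = p then 1 else 0 := by
      intro i
      have H2 := H i.castSucc (Fin.last n)
      simp only [mulStd, stdMul] at H2
      simp [iota_cc, iota_cl, iota_lc, iota_ll, (Fin.castSucc_lt_last p).ne',
        (Fin.castSucc_lt_last i).ne, Fin.castSucc_inj] at H2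
      rcases eq_or_ne i p with rfl | hip
      · simp only [if_pos rfl] at H2 ⊢
        simp only [if_true] at H2 ⊢
        exact mul_right_cancel₀ ht0 (by rw [H2, one_mul])
      · simp only [if_neg hip] at H2 ⊢
        rcases mul_eq_zero.mp H2 with h0 | h0
        · exact h0
        · exact absurd h0 ht0
    have hrow : ∀ j : Fin n, x p j = if p = j then 1 else 0 := by
      intro j
      have H2 := H (Fin.last n) j.castSucc
      simp only [mulStd, stdMul] at H2
      simp [iota_cc, iota_cl, iota_lc, iota_ll, (Fin.castSucc_lt_last p).ne',
        (Fin.castSucc_lt_last j).ne, Fin.castSucc_inj, eq_comm] at H2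
      rw [hxy, H2]
      by_cases hpj : p = j
      · simp [hpj]
      · simp [hpj, Ne.symm hpj]
    set A : Matrix (Fin (n-1)) (Fin (n-1)) F :=
      fun i j => x ⟨i, by omega⟩ ⟨j, by omega⟩ with hA
    have hxA : x = Matrix.reindex (finCongr (by omega : n - 1 + 1 = n))
        (finCongr (by omega)) (iota A) := by
      rw [key]
      intro i j
      by_cases hi : (i : ℕ) < n - 1
      · have hci : Fin.cast (by omega : n = n - 1 + 1) i = Fin.castSucc ⟨i, hi⟩ := by
          simp [Fin.ext_iff]
        by_cases hj : (j : ℕ) < n - 1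
        · have hcj : Fin.cast (by omega : n = n - 1 + 1) j = Fin.castSucc ⟨j, hj⟩ := by
            simp [Fin.ext_iff]
          rw [hci, hcj, iota_cc]
        · have hj' : (j : ℕ) = n - 1 := by omega
          have hcj : Fin.cast (by omega : n = n - 1 + 1) j = Fin.last (n-1) := by
            simp [Fin.ext_iff, hj']
          have hjp : j = p := by simp [Fin.ext_iff, hj', hp]
          rw [hci, hcj, iota_cl, hjp, hcol i, if_neg (by simp [Fin.ext_iff]; omega)]
      · have hi' : (i : ℕ) = n - 1 := by omega
        have hci : Fin.cast (by omega : n = n - 1 + 1) i = Fin.last (n-1) := by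
          simp [Fin.ext_iff, hi']
        have hip : i = p := by simp [Fin.ext_iff, hi', hp]
        by_cases hj : (j : ℕ) < n - 1
        · have hcj : Fin.cast (by omega : n = n - 1 + 1) j = Fin.castSucc ⟨j, hj⟩ := by
            simp [Fin.ext_iff]
          rw [hci, hcj, iota_lc, hip, hrow j, if_neg (by simp [Fin.ext_iff]; omega)]
        · have hj' : (j : ℕ) = n - 1 := by omega
          have hcj : Fin.cast (by omega : n = n - 1 + 1) j = Fin.last (n-1) := by
            simp [Fin.ext_iff, hj']
          have hjp : j = p := by simp [Fin.ext_iff, hj', hp]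
          rw [hci, hcj, iota_ll, hip, hjp, hcol p, if_pos rfl]
    refine ⟨hxy, A, ?_, hxA⟩
    have hdet : x.det = A.det := by
      rw [hxA, Matrix.det_reindex_self]
      unfold iota
      rw [Matrix.det_reindex_self, Matrix.det_fromBlocks_zero₂₁]
      simp
    rw [hdet] at hx
    exact hx
  · rintro ⟨hxy, A, hA, hxA⟩
    subst hxy
    have hcol : ∀ i : Fin n, x i p = if i = p then 1 else 0 := by
      intro i
      have := (key x A).mp hxA i p
      by_cases hi : (i : ℕ) < n - 1
      · have hci : Fin.cast (by omega : n = n - 1 + 1) i = Fin.castSucc ⟨i, hi⟩ := by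
          simp [Fin.ext_iff]
        have hcp : Fin.cast (by omega : n = n - 1 + 1) p = Fin.last (n-1) := by
          simp [Fin.ext_iff, hp]
        rw [hci, hcp, iota_cl] at this
        rw [this, if_neg (by simp [Fin.ext_iff, hp]; omega)]
      · have hip : i = p := by simp [Fin.ext_iff, hp]; omega
        have hci : Fin.cast (by omega : n = n - 1 + 1) i = Fin.last (n-1) := by
          simp [Fin.ext_iff]; omega
        have hcp : Fin.cast (by omega : n = n - 1 + 1) p = Fin.last (n-1) := by
          simp [Fin.ext_iff, hp]
        rw [hip] at this ⊢
        rw [hcp, iota_ll] at this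
        rw [this, if_pos rfl]
    have hrow : ∀ j : Fin n, x p j = if p = j then 1 else 0 := by
      intro j
      have := (key x A).mp hxA p j
      have hcp : Fin.cast (by omega : n = n - 1 + 1) p = Fin.last (n-1) := by
        simp [Fin.ext_iff, hp]
      by_cases hj : (j : ℕ) < n - 1
      · have hcj : Fin.cast (by omega : n = n - 1 + 1) j = Fin.castSucc ⟨j, hj⟩ := by
          simp [Fin.ext_iff]
        rw [hcp, hcj, iota_lc] at this
        rw [this, if_neg (by simp [Fin.ext_iff, hp]; omega)]
      · have hjp : j = p := by simp [Fin.ext_iff, hp]; omega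
        have hcj : Fin.cast (by omega : n = n - 1 + 1) j = Fin.last (n-1) := by
          simp [Fin.ext_iff]; omega
        rw [hjp] at this ⊢
        rw [hcp, iota_ll] at this
        rw [this, if_pos rfl]
    rw [mul_add, mul_add, mul_one, add_mul, add_mul, one_mul]
    ext i j
    simp only [Matrix.add_apply, he1, he2, mulStd, stdMul]
    induction i using Fin.lastCases with
    | last =>
      induction j using Fin.lastCases with
      | last =>
        simp [iota_ll, iota_lc, iota_cl, (Fin.castSucc_lt_last p).ne', hrow, hcol]
      | cast j =>
        simp [iota_lc, iota_cc, iota_cl, iota_ll, (Fin.castSucc_lt_last j).ne,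
          (Fin.castSucc_lt_last p).ne', Fin.castSucc_inj, hrow j, eq_comm]
    | cast i =>
      induction j using Fin.lastCases with
      | last =>
        simp [iota_cl, iota_cc, iota_ll, (Fin.castSucc_lt_last i).ne,
          (Fin.castSucc_lt_last p).ne', Fin.castSucc_inj, hcol i, mul_comm]
      | cast j =>
        simp [iota_cc, iota_cl, iota_lc, (Fin.castSucc_lt_last i).ne,
          (Fin.castSucc_lt_last j).ne]
end

section
/- Let p be a prime, l ≥ 1 an integer, l₀ ∈ ℤ, and u ∈ ℚ_p. Suppose the 2×2 matrix [[p^l, u·p^{-l}],[p^{l₀+l}, p^{l₀-l}·u + p^{-l}]] lies in GL(2, ℤ_p) (all entries in ℤ_p and determinant a unit; in fact its determinant equals 1). Then l₀ = −l and u + p^l ∈ p^{2l}·ℤ_p. -/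
/-- The 2×2 local computation (equation (193)): integrality of the matrix forces
`l₀ = -l` and `u ∈ -p^l + p^{2l}·ℤ_p`. -/
theorem stmt_11 (p : ℕ) [Fact p.Prime] (l l₀ : ℤ) (hl : 1 ≤ l) (u : ℚ_[p])
    (hint : ∀ i j, ‖(!![(p : ℚ_[p]) ^ l, u * (p : ℚ_[p]) ^ (-l);
        (p : ℚ_[p]) ^ (l₀ + l), (p : ℚ_[p]) ^ (l₀ - l) * u + (p : ℚ_[p]) ^ (-l)]) i j‖ ≤ 1)
    (hdet : ‖(!![(p : ℚ_[p]) ^ l, u * (p : ℚ_[p]) ^ (-l);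
        (p : ℚ_[p]) ^ (l₀ + l), (p : ℚ_[p]) ^ (l₀ - l) * u + (p : ℚ_[p]) ^ (-l)]).det‖ = 1) :
    l₀ = -l ∧ ‖u + (p : ℚ_[p]) ^ l‖ ≤ (p : ℝ) ^ (-(2 * l)) := by
  have hp1 : (1 : ℝ) < (p : ℝ) := by
    exact_mod_cast (Fact.out : p.Prime).one_lt
  have hp0 : (0 : ℝ) < (p : ℝ) := lt_trans one_pos hp1
  have h01 : ‖u * (p : ℚ_[p]) ^ (-l)‖ ≤ 1 := by simpa using hint 0 1
  have h10 : ‖(p : ℚ_[p]) ^ (l₀ + l)‖ ≤ 1 := by simpa using hint 1 0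
  have h11 : ‖(p : ℚ_[p]) ^ (l₀ - l) * u + (p : ℚ_[p]) ^ (-l)‖ ≤ 1 := by simpa using hint 1 1
  rw [norm_mul, Padic.norm_p_zpow, neg_neg] at h01
  rw [Padic.norm_p_zpow] at h10
  -- h10 : p^(-(l₀+l)) ≤ 1 gives -l ≤ l₀
  have hll : -l ≤ l₀ := by
    by_contra h
    push_neg at h
    have : (1:ℝ) < (p:ℝ) ^ (-(l₀ + l)) := one_lt_zpow₀ hp1 (by linarith)
    linarith
  have hzpos : ∀ m : ℤ, (0:ℝ) < (p:ℝ) ^ m := fun m => zpow_pos hp0 m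
  have hul : ‖u‖ ≤ (p : ℝ) ^ (-l) := by
    have h := mul_le_mul_of_nonneg_right h01 (le_of_lt (hzpos (-l)))
    rwa [one_mul, mul_assoc, ← zpow_add₀ (ne_of_gt hp0), add_neg_cancel, zpow_zero,
      mul_one] at h
  -- ultrametric: the norms of the two summands in entry (1,1) must agree
  have hnl : ‖(p : ℚ_[p]) ^ (-l)‖ = (p : ℝ) ^ l := by
    rw [Padic.norm_p_zpow, neg_neg]
  have hkey : ‖(p : ℚ_[p]) ^ (l₀ - l) * u‖ = (p : ℝ) ^ l := by
    by_contra h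
    have hne : ‖(p : ℚ_[p]) ^ (l₀ - l) * u‖ ≠ ‖(p : ℚ_[p]) ^ (-l)‖ := by rw [hnl]; exact h
    have := Padic.add_eq_max_of_ne hne
    rw [this, hnl] at h11
    have h1l : (1:ℝ) < (p:ℝ) ^ l := one_lt_zpow₀ hp1 (by linarith)
    have := le_max_right ‖(p : ℚ_[p]) ^ (l₀ - l) * u‖ ((p:ℝ) ^ l)
    linarith
  rw [norm_mul, Padic.norm_p_zpow, neg_sub] at hkey
  -- deduce l₀ ≤ -l
  have hle : l₀ ≤ -l := by
    by_contra h
    push_neg at h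
    have h1 : (p:ℝ) ^ (l - l₀) * ‖u‖ ≤ (p:ℝ) ^ (l - l₀) * (p:ℝ) ^ (-l) :=
      mul_le_mul_of_nonneg_left hul (le_of_lt (hzpos _))
    rw [← zpow_add₀ (ne_of_gt hp0)] at h1
    have h2 : (p:ℝ) ^ (l - l₀ + -l) < (p:ℝ) ^ l :=
      zpow_lt_zpow_right₀ hp1 (by linarith)
    linarith [hkey ▸ h1]
  have hl0 : l₀ = -l := le_antisymm hle hll
  refine ⟨hl0, ?_⟩
  subst hl0
  -- rewrite  u + p^l = p^(2l) * (p^(-l-l) * u + p^(-l))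
  have hfact : u + (p : ℚ_[p]) ^ l
      = (p : ℚ_[p]) ^ (2 * l) * ((p : ℚ_[p]) ^ (-l - l) * u + (p : ℚ_[p]) ^ (-l)) := by
    have hpne : ((p : ℚ_[p])) ≠ 0 := by
      exact_mod_cast (Nat.cast_ne_zero.mpr (Fact.out : p.Prime).ne_zero)
    rw [mul_add, ← mul_assoc, ← zpow_add₀ hpne, ← zpow_add₀ hpne]
    ring_nf
    simp
  rw [hfact, norm_mul, Padic.norm_p_zpow]
  calc (p:ℝ) ^ (-(2*l)) * ‖(p : ℚ_[p]) ^ (-l - l) * u + (p : ℚ_[p]) ^ (-l)‖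
      ≤ (p:ℝ) ^ (-(2*l)) * 1 := by
        exact mul_le_mul_of_nonneg_left h11 (le_of_lt (hzpos _))
    _ = (p:ℝ) ^ (-(2*l)) := mul_one _
end
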